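/- arXiv:1601.02817 — 7 statements merged into one kernel-verified Lean document; each statement's English description precedes it below -/
import Mathlib

section
/- For every T > 0 the system (A,B) is controllable in time T if and only if the Kalman rank condition holds: the N×(NM) block matrix [B, AB, A²B, …, A^{N−1}B] has rank N. -/
/-!
If `c` annihilates the columns of the Kalman matrix, Cayley–Hamilton makes `cᵀ A^k B = 0` for
every `k`, hence `cᵀ e^{sA} B = 0` for every `s` by the exponential series, so `c` is orthogonal to
every state reachable from `0`; controllability then forces `c = 0`.

Conversely, the Gramian `W c = ∫₀ᵀ e^{(T-t)A} B Bᵀ e^{(T-t)Aᵀ} c dt` satisfies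
`cᵀ W c = ∫₀ᵀ |Bᵀ e^{(T-t)Aᵀ} c|² dt`, so `W c = 0` makes `s ↦ cᵀ e^{sA} B` vanish on `(0, T)`;
differentiating repeatedly and letting `s → 0` gives `cᵀ A^k B = 0`, so `c = 0` under the rank
condition. Hence `W` is invertible and `t ↦ Bᵀ e^{(T-t)Aᵀ} W⁻¹ (x¹ - e^{TA} x⁰)` steers `x⁰`
to `x¹`.
-/

open Matrix MeasureTheory NormedSpace Set Filter

theorem ContinuousLinearMap.map_exp_eq_zero_of_map_pow_eq_zero {𝕂 𝔸 F : Type*} [RCLike 𝕂]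
    [NormedRing 𝔸] [NormedAlgebra 𝕂 𝔸] [CompleteSpace 𝔸] [NormedAddCommGroup F]
    [NormedSpace 𝕂 F] (φ : 𝔸 →L[𝕂] F) {a : 𝔸} (h : ∀ k, φ (a ^ k) = 0) : φ (exp a) = 0 := by
  rw [exp_eq_tsum 𝕂, φ.map_tsum (expSeries_summable' a)]
  simp [h]

theorem ContinuousLinearMap.map_pow_eq_zero_of_map_exp_smul_eq_zero {𝔸 F : Type*} [NormedRing 𝔸]
    [NormedAlgebra ℝ 𝔸] [CompleteSpace 𝔸] [NormedAddCommGroup F] [NormedSpace ℝ F]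
    (φ : 𝔸 →L[ℝ] F) {a : 𝔸} {T : ℝ} (hT : 0 < T) (h : ∀ s ∈ Ioo 0 T, φ (exp (s • a)) = 0)
    (k : ℕ) : φ (a ^ k) = 0 := by
  have hderiv (k : ℕ) (s : ℝ) :
      HasDerivAt (fun s : ℝ => φ (exp (s • a) * a ^ k)) (φ (exp (s • a) * a ^ (k + 1))) s := by
    simpa only [Function.comp_def, mul_assoc, ← pow_succ'] using
      φ.hasFDerivAt.comp_hasDerivAt s ((hasDerivAt_exp_smul_const a s).mul_const (a ^ k))
  have hIoo (k : ℕ) : EqOn (fun s : ℝ => φ (exp (s • a) * a ^ k)) 0 (Ioo 0 T) := by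
    induction k with
    | zero => simpa [EqOn] using h
    | succ k ih =>
      intro s hs
      show φ (exp (s • a) * a ^ (k + 1)) = 0
      rw [← (hderiv k s).deriv, (eventuallyEq_of_mem (isOpen_Ioo.mem_nhds hs) ih).deriv_eq]
      exact deriv_const s 0
  have hcont : Continuous fun s : ℝ => φ (exp (s • a) * a ^ k) :=
    continuous_iff_continuousAt.2 fun s => (hderiv k s).continuousAt
  have hIcc := (hIoo k).closure hcont continuous_const
  rw [closure_Ioo hT.ne] at hIcc
  simpa using hIcc (left_mem_Icc.2 hT.le)

namespace Matrix

variable {R M n m : Type*} [Fintype n]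

open Polynomial in
theorem map_pow_eq_zero_of_forall_lt_card [DecidableEq n] [CommRing R] [Nontrivial R]
    [AddCommGroup M] [Module R M] (φ : Matrix n n R →ₗ[R] M) (A : Matrix n n R)
    (h : ∀ j < Fintype.card n, φ (A ^ j) = 0) (k : ℕ) : φ (A ^ k) = 0 := by
  rw [pow_eq_aeval_mod_charpoly, aeval_eq_sum_range, map_sum]
  refine Finset.sum_eq_zero fun j _ => ?_
  rw [map_smul]
  rcases lt_or_ge j (Fintype.card n) with hj | hj
  · rw [h j hj, smul_zero]
  · rw [coeff_eq_zero_of_degree_lt, zero_smul]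
    calc (X ^ k %ₘ A.charpoly).degree < A.charpoly.degree :=
          degree_modByMonic_lt _ A.charpoly_monic
      _ = Fintype.card n := A.charpoly_degree_eq_dim
      _ ≤ j := by exact_mod_cast hj

theorem rank_eq_card_iff_vecMul_eq_zero [Field R] {ι : Type*} [Fintype ι] (K : Matrix n ι R) :
    K.rank = Fintype.card n ↔ ∀ c, c ᵥ* K = 0 → c = 0 := by
  rw [rank_eq_finrank_span_row, ← Set.finrank, eq_comm,
    ← linearIndependent_iff_card_eq_finrank_span, Fintype.linearIndependent_iff]
  simp [vecMul_eq_sum, funext_iff]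

def kalmanMatrix [DecidableEq n] [CommSemiring R] (A : Matrix n n R) (B : Matrix n m R) (K : ℕ) :
    Matrix n (Fin K × m) R :=
  of fun i p => (A ^ (p.1 : ℕ) * B) i p.2

theorem vecMul_kalmanMatrix_eq_zero_iff [DecidableEq n] [CommSemiring R] (A : Matrix n n R)
    (B : Matrix n m R) (K : ℕ) (c : n → R) :
    c ᵥ* kalmanMatrix A B K = 0 ↔ ∀ j < K, c ᵥ* (A ^ j * B) = 0 := by
  have hentry (j : Fin K) (i : m) :
      (c ᵥ* kalmanMatrix A B K) (j, i) = (c ᵥ* (A ^ (j : ℕ) * B)) i :=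
    rfl
  simp only [funext_iff, Prod.forall, hentry, Pi.zero_apply]
  exact ⟨fun h j hj => h ⟨j, hj⟩, fun h j => h j j.2⟩

def vecMulMulLinear [CommSemiring R] (c : n → R) (B : Matrix n m R) :
    Matrix n n R →ₗ[R] m → R where
  toFun X := c ᵥ* (X * B)
  map_add' X Y := by simp [Matrix.add_mul, vecMul_add]
  map_smul' r X := by simp [Matrix.smul_mul, vecMul_smul]

end Matrix

theorem Continuous.memLp_restrict_Ioc {E : Type*} [NormedAddCommGroup E] {f : ℝ → E}
    (hf : Continuous f) (p : ENNReal) (a b : ℝ) : MemLp f p (volume.restrict (Ioc a b)) := by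
  obtain ⟨C, hC⟩ := (isCompact_Icc (a := a) (b := b)).exists_bound_of_continuousOn hf.continuousOn
  exact MemLp.of_bound hf.aestronglyMeasurable C
    (ae_restrict_of_forall_mem measurableSet_Ioc fun t ht => hC t (Ioc_subset_Icc_self ht))

theorem ContinuousLinearMap.map_intervalIntegral_eq_zero {E F : Type*} [NormedAddCommGroup E]
    [NormedSpace ℝ E] [CompleteSpace E] [NormedAddCommGroup F] [NormedSpace ℝ F] [CompleteSpace F]
    (L : E →L[ℝ] F) {f : ℝ → E} {a b : ℝ} (h : ∀ t, L (f t) = 0) :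
    L (∫ t in a..b, f t) = 0 := by
  by_cases hf : IntervalIntegrable f volume a b
  · simp [← L.intervalIntegral_comp_comm hf, h]
  · rw [intervalIntegral.integral_undef hf, map_zero]

theorem eqOn_zero_of_integral_dotProduct_self_eq_zero {m : Type*} [Fintype m] {g : ℝ → m → ℝ}
    (hg : Continuous g) {a b : ℝ} (hab : a ≤ b) (h : ∫ t in a..b, g t ⬝ᵥ g t = 0) :
    EqOn g 0 (Ioc a b) := by
  have hcont : Continuous fun t => g t ⬝ᵥ g t := hg.dotProduct hg
  rw [intervalIntegral.integral_eq_zero_iff_of_le_of_nonneg_ae (f := fun t => g t ⬝ᵥ g t) hab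
    (ae_of_all _ fun t => Fintype.sum_nonneg fun i => mul_self_nonneg (g t i))
    (hcont.intervalIntegrable a b)] at h
  intro t ht
  exact dotProduct_self_eq_zero.1 <|
    Measure.eqOn_Ioc_of_ae_eq volume h hcont.continuousOn continuousOn_const ht

section Control

-- Matrices carry no global norm; any submultiplicative one makes the calculus of `exp` available.
attribute [local instance] Matrix.linftyOpNormedAddCommGroup Matrix.linftyOpNormedRing
  Matrix.linftyOpNormedAlgebra

variable {n m : Type*} [Fintype n] [DecidableEq n] (A : Matrix n n ℝ) (B : Matrix n m ℝ) (T : ℝ)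

theorem continuous_exp_sub_smul : Continuous fun t : ℝ => exp ((T - t) • A) :=
  exp_continuous.comp ((continuous_const.sub continuous_id).smul continuous_const)

/-- `t ↦ Bᵀ e^{(T-t)Aᵀ} c`, written as a row vector. -/
noncomputable def gramianControl (c : n → ℝ) (t : ℝ) : m → ℝ :=
  c ᵥ* (exp ((T - t) • A) * B)

theorem continuous_gramianControl (c : n → ℝ) : Continuous (gramianControl A B T c) :=
  continuous_const.matrix_vecMul ((continuous_exp_sub_smul A T).matrix_mul continuous_const)

variable [Fintype m]

noncomputable def zeroStateResponse (u : ℝ → m → ℝ) : n → ℝ :=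
  ∫ t in (0 : ℝ)..T, exp ((T - t) • A) *ᵥ (B *ᵥ u t)

theorem dotProduct_exp_mulVec_mulVec (c : n → ℝ) (t : ℝ) (v : m → ℝ) :
    c ⬝ᵥ (exp ((T - t) • A) *ᵥ (B *ᵥ v)) = gramianControl A B T c t ⬝ᵥ v := by
  rw [dotProduct_mulVec, dotProduct_mulVec, vecMul_vecMul, gramianControl]

theorem intervalIntegrable_exp_mulVec_mulVec {u : ℝ → m → ℝ} (hu : Continuous u) :
    IntervalIntegrable (fun t => exp ((T - t) • A) *ᵥ (B *ᵥ u t)) volume 0 T :=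
  ((continuous_exp_sub_smul A T).matrix_mulVec
    (continuous_const.matrix_mulVec hu)).intervalIntegrable 0 T

theorem zeroStateResponse_add {u v : ℝ → m → ℝ} (hu : Continuous u) (hv : Continuous v) :
    zeroStateResponse A B T (u + v) = zeroStateResponse A B T u + zeroStateResponse A B T v := by
  simp only [zeroStateResponse, Pi.add_apply, mulVec_add]
  exact intervalIntegral.integral_add (intervalIntegrable_exp_mulVec_mulVec A B T hu)
    (intervalIntegrable_exp_mulVec_mulVec A B T hv)

theorem zeroStateResponse_smul (r : ℝ) (u : ℝ → m → ℝ) :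
    zeroStateResponse A B T (r • u) = r • zeroStateResponse A B T u := by
  simp only [zeroStateResponse, Pi.smul_apply, mulVec_smul, intervalIntegral.integral_smul]

noncomputable def gramian : (n → ℝ) →ₗ[ℝ] n → ℝ where
  toFun c := zeroStateResponse A B T (gramianControl A B T c)
  map_add' c c' := by
    rw [← zeroStateResponse_add A B T (continuous_gramianControl A B T c)
      (continuous_gramianControl A B T c')]
    congr 1
    ext t : 1
    simp [gramianControl, add_vecMul]
  map_smul' r c := by
    rw [RingHom.id_apply, ← zeroStateResponse_smul]
    congr 1
    ext t : 1
    simp [gramianControl, smul_vecMul]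

theorem dotProduct_zeroStateResponse_eq_zero {c : n → ℝ} (hc : ∀ k : ℕ, c ᵥ* (A ^ k * B) = 0)
    (u : ℝ → m → ℝ) : c ⬝ᵥ zeroStateResponse A B T u = 0 := by
  have hexp (s : ℝ) : c ᵥ* (exp (s • A) * B) = 0 :=
    (vecMulMulLinear c B).toContinuousLinearMap.map_exp_eq_zero_of_map_pow_eq_zero fun k => by
      show c ᵥ* ((s • A) ^ k * B) = 0
      rw [smul_pow, Matrix.smul_mul, vecMul_smul, hc, smul_zero]
  exact (dotProductBilin ℝ ℝ c).toContinuousLinearMap.map_intervalIntegral_eq_zero fun t => by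
    show c ⬝ᵥ _ = 0
    rw [dotProduct_exp_mulVec_mulVec, gramianControl, hexp, zero_dotProduct]

theorem dotProduct_gramian_self (c : n → ℝ) :
    c ⬝ᵥ gramian A B T c =
      ∫ t in (0 : ℝ)..T, gramianControl A B T c t ⬝ᵥ gramianControl A B T c t := by
  calc c ⬝ᵥ gramian A B T c
      = (dotProductBilin ℝ ℝ c).toContinuousLinearMap
          (∫ t in (0 : ℝ)..T, exp ((T - t) • A) *ᵥ (B *ᵥ gramianControl A B T c t)) := rfl
    _ = ∫ t in (0 : ℝ)..T, c ⬝ᵥ (exp ((T - t) • A) *ᵥ (B *ᵥ gramianControl A B T c t)) :=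
        ((dotProductBilin ℝ ℝ c).toContinuousLinearMap.intervalIntegral_comp_comm
          (intervalIntegrable_exp_mulVec_mulVec A B T (continuous_gramianControl A B T c))).symm
    _ = _ := by simp only [dotProduct_exp_mulVec_mulVec]

theorem vecMul_pow_mul_eq_zero_of_gramian_eq_zero {T : ℝ} (hT : 0 < T) {c : n → ℝ}
    (hc : gramian A B T c = 0) (k : ℕ) : c ᵥ* (A ^ k * B) = 0 := by
  have hzero : EqOn (gramianControl A B T c) 0 (Ioc 0 T) :=
    eqOn_zero_of_integral_dotProduct_self_eq_zero (continuous_gramianControl A B T c) hT.le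
      (by rw [← dotProduct_gramian_self, hc, dotProduct_zero])
  refine (vecMulMulLinear c B).toContinuousLinearMap.map_pow_eq_zero_of_map_exp_smul_eq_zero hT
    (fun s hs => ?_) k
  have hs' := hzero (x := T - s) ⟨by linarith [hs.2], by linarith [hs.1]⟩
  rwa [gramianControl, sub_sub_cancel] at hs'

end Control

/-- **Kalman rank condition.** For every `T > 0`, the linear system `x' = A x + B u`
is controllable in time `T` (every initial state can be driven to every final state by an
`L²` control, via the variation of constants formula) if and only if the block matrix
`[B, AB, A²B, …, A^{N−1}B]` has rank `N`. -/
theorem controllable_iff_kalman_rank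
    {N M : ℕ} (A : Matrix (Fin N) (Fin N) ℝ) (B : Matrix (Fin N) (Fin M) ℝ)
    (T : ℝ) (hT : 0 < T) :
    (∀ x0 x1 : Fin N → ℝ, ∃ u : ℝ → Fin M → ℝ,
        MemLp u 2 (volume.restrict (Set.Ioc 0 T)) ∧
        x1 = (NormedSpace.exp (T • A)).mulVec x0 +
          ∫ t in (0:ℝ)..T, (NormedSpace.exp ((T - t) • A)).mulVec (B.mulVec (u t))) ↔
      (Matrix.of fun (i : Fin N) (p : Fin N × Fin M) =>
        ((A ^ (p.1 : ℕ)) * B) i p.2).rank = N := by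
  change _ ↔ (kalmanMatrix A B N).rank = N
  have hrank := (kalmanMatrix A B N).rank_eq_card_iff_vecMul_eq_zero
  rw [Fintype.card_fin] at hrank
  simp only [hrank, vecMul_kalmanMatrix_eq_zero_iff]
  constructor
  · intro hctrl c hc
    obtain ⟨u, -, hu⟩ := hctrl 0 c
    rw [mulVec_zero, zero_add] at hu
    have hpow (k : ℕ) : c ᵥ* (A ^ k * B) = 0 :=
      map_pow_eq_zero_of_forall_lt_card (vecMulMulLinear c B) A
        (fun j hj => hc j (Fintype.card_fin N ▸ hj)) k
    rw [← dotProduct_self_eq_zero]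
    nth_rw 2 [hu]
    exact dotProduct_zeroStateResponse_eq_zero A B T hpow u
  · intro hker x0 x1
    have hinj : Function.Injective (gramian A B T) := by
      rw [← LinearMap.ker_eq_bot, Submodule.eq_bot_iff]
      exact fun c hc => hker c fun j _ => vecMul_pow_mul_eq_zero_of_gramian_eq_zero A B hT hc j
    obtain ⟨c, hc⟩ := LinearMap.injective_iff_surjective.1 hinj (x1 - exp (T • A) *ᵥ x0)
    refine ⟨gramianControl A B T c,
      (continuous_gramianControl A B T c).memLp_restrict_Ioc 2 0 T, ?_⟩
    change x1 = _ + gramian A B T c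
    rw [hc, add_sub_cancel]
end

section
/- For any φ⁰ ∈ ℝ^N, the control u(t) = Bᵀ e^{(T−t)Aᵀ} φ⁰ drives the initial state x⁰ to the final state x(T) = e^{TA} x⁰ + Λ φ⁰. Consequently, if φ⁰ solves the linear system Λ φ⁰ = x¹ − e^{TA} x⁰, then this control steers the system exactly to the target: x(T) = x¹. -/
/-! Pulling the constant vector `φ⁰` out of the integral turns the response
`∫₀ᵀ e^{(T−t)A} B Bᵀ e^{(T−t)Aᵀ} φ⁰ dt` to the control into `Λ φ⁰`: evaluation `M ↦ M φ⁰` is a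
continuous linear map, so it commutes with the integral, and the integrand is continuous because
the matrix exponential is. -/

open Matrix MeasureTheory

section
attribute [local instance] Matrix.linftyOpNormedRing Matrix.linftyOpNormedAlgebra

@[fun_prop]
theorem Continuous.matrix_exp {X m 𝔸 : Type*} [TopologicalSpace X] [Fintype m] [DecidableEq m]
    [NormedRing 𝔸] [NormedAlgebra ℚ 𝔸] [CompleteSpace 𝔸] {f : X → Matrix m m 𝔸}
    (hf : Continuous f) : Continuous fun x => NormedSpace.exp (f x) :=
  -- The operator-norm uniformity agrees with the product one only after unfolding,
  -- so completeness is not found by instance search.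
  (@NormedSpace.exp_continuous _ _ _ (inferInstanceAs (CompleteSpace (m → m → 𝔸)))).comp hf

end

attribute [local instance] Matrix.normedAddCommGroup Matrix.normedSpace

theorem intervalIntegral.integral_mulVec {m n 𝕜 : Type*} [Fintype m] [Fintype n] [RCLike 𝕜]
    {F : ℝ → Matrix m n 𝕜} (hF : Continuous F) (a b : ℝ) (v : n → 𝕜) :
    ∫ t in a..b, F t *ᵥ v = (∫ t in a..b, F t) *ᵥ v :=
  (LinearMap.toContinuousLinearMap ((mulVecBilin 𝕜 𝕜).flip v)).intervalIntegral_comp_comm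
    (hF.intervalIntegrable a b)

theorem control_from_gramian_minimiser_general
    {N M : ℕ} (A : Matrix (Fin N) (Fin N) ℝ) (B : Matrix (Fin N) (Fin M) ℝ)
    (T : ℝ)
    (Λ : Matrix (Fin N) (Fin N) ℝ)
    (hΛ : Λ = ∫ t in (0:ℝ)..T,
      NormedSpace.exp ((T - t) • A) * B * Bᵀ * NormedSpace.exp ((T - t) • Aᵀ))
    (x0 x1 φ0 : Fin N → ℝ) :
    (NormedSpace.exp (T • A)).mulVec x0 +
        (∫ t in (0:ℝ)..T, (NormedSpace.exp ((T - t) • A)).mulVec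
          (B.mulVec (Bᵀ.mulVec ((NormedSpace.exp ((T - t) • Aᵀ)).mulVec φ0)))) =
      (NormedSpace.exp (T • A)).mulVec x0 + Λ.mulVec φ0 ∧
    (Λ.mulVec φ0 = x1 - (NormedSpace.exp (T • A)).mulVec x0 →
      (NormedSpace.exp (T • A)).mulVec x0 +
        (∫ t in (0:ℝ)..T, (NormedSpace.exp ((T - t) • A)).mulVec
          (B.mulVec (Bᵀ.mulVec ((NormedSpace.exp ((T - t) • Aᵀ)).mulVec φ0)))) = x1) := by
  have hcont : Continuous fun t : ℝ =>
      NormedSpace.exp ((T - t) • A) * B * Bᵀ * NormedSpace.exp ((T - t) • Aᵀ) := by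
    fun_prop
  have hresponse : ∫ t in (0:ℝ)..T, (NormedSpace.exp ((T - t) • A)).mulVec
      (B.mulVec (Bᵀ.mulVec ((NormedSpace.exp ((T - t) • Aᵀ)).mulVec φ0))) = Λ *ᵥ φ0 := by
    rw [hΛ, ← intervalIntegral.integral_mulVec hcont]
    simp only [mulVec_mulVec, Matrix.mul_assoc]
  refine ⟨by rw [hresponse], fun hφ0 => ?_⟩
  rw [hresponse, hφ0, add_sub_cancel]

/-- For any `φ⁰`, the control `u(t) = Bᵀ e^{(T−t)Aᵀ} φ⁰` drives the initial state `x⁰` to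
`x(T) = e^{TA} x⁰ + Λ φ⁰`; consequently, if `Λ φ⁰ = x¹ − e^{TA} x⁰`, this control steers the
system exactly to `x¹`. -/
theorem control_from_gramian_minimiser
    {N M : ℕ} (A : Matrix (Fin N) (Fin N) ℝ) (B : Matrix (Fin N) (Fin M) ℝ)
    (T : ℝ) (hT : 0 < T)
    (Λ : Matrix (Fin N) (Fin N) ℝ)
    (hΛ : Λ = ∫ t in (0:ℝ)..T,
      NormedSpace.exp ((T - t) • A) * B * Bᵀ * NormedSpace.exp ((T - t) • Aᵀ))
    (x0 x1 φ0 : Fin N → ℝ) :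
    (NormedSpace.exp (T • A)).mulVec x0 +
        (∫ t in (0:ℝ)..T, (NormedSpace.exp ((T - t) • A)).mulVec
          (B.mulVec (Bᵀ.mulVec ((NormedSpace.exp ((T - t) • Aᵀ)).mulVec φ0)))) =
      (NormedSpace.exp (T • A)).mulVec x0 + Λ.mulVec φ0 ∧
    (Λ.mulVec φ0 = x1 - (NormedSpace.exp (T • A)).mulVec x0 →
      (NormedSpace.exp (T • A)).mulVec x0 +
        (∫ t in (0:ℝ)..T, (NormedSpace.exp ((T - t) • A)).mulVec
          (B.mulVec (Bᵀ.mulVec ((NormedSpace.exp ((T - t) • Aᵀ)).mulVec φ0)))) = x1) :=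
  control_from_gramian_minimiser_general A B T Λ hΛ x0 x1 φ0
end

section
/- Assume the Gramian Λ is positive definite. Then the quadratic functional J(φ⁰) = ½ ∫₀^T |Bᵀ e^{(T−t)Aᵀ} φ⁰|² dt − ⟨x¹, φ⁰⟩ + ⟨x⁰, e^{TAᵀ} φ⁰⟩ equals ½⟨Λφ⁰, φ⁰⟩ − ⟨x¹ − e^{TA}x⁰, φ⁰⟩, it admits a unique global minimizer φ̃⁰ over ℝ^N, and this minimizer is characterized by the Euler–Lagrange equation Λ φ̃⁰ = x¹ − e^{TA} x⁰. -/
open Matrix MeasureTheory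

/-!
Since `e^{sAᵀ} = (e^{sA})ᵀ`, the integrand of `J` is `⟨e^{sA} B Bᵀ e^{sAᵀ} φ⁰, φ⁰⟩`, and the
quadratic form commutes with the integral, which gives the formula for `J` in terms of `Λ`. For a
positive definite `Λ` and a solution `φ̃` of `Λ φ̃ = b`, Taylor expansion gives
`J ψ = J φ̃ + ½⟨Λ(ψ − φ̃), ψ − φ̃⟩`, so the minimisers are exactly the solutions of the linear
system, of which there is exactly one since `Λ` is invertible.
-/

section QuadraticFunctional

variable {n : Type*} [Fintype n]

noncomputable def quadraticFunctional (Q : Matrix n n ℝ) (b φ : n → ℝ) : ℝ :=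
  1 / 2 * (Q *ᵥ φ ⬝ᵥ φ) - b ⬝ᵥ φ

variable {Q : Matrix n n ℝ} {b : n → ℝ}

theorem quadraticFunctional_eq_add_of_mulVec_eq (hQ : Q.IsHermitian) {φ : n → ℝ}
    (hφ : Q *ᵥ φ = b) (ψ : n → ℝ) :
    quadraticFunctional Q b ψ
      = quadraticFunctional Q b φ + 1 / 2 * (Q *ᵥ (ψ - φ) ⬝ᵥ (ψ - φ)) := by
  have hsymm : Q *ᵥ ψ ⬝ᵥ φ = Q *ᵥ φ ⬝ᵥ ψ := by
    rw [dotProduct_comm, dotProduct_mulVec, ← mulVec_transpose,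
      ← conjTranspose_eq_transpose_of_trivial, hQ.eq]
  simp only [quadraticFunctional, ← hφ, mulVec_sub, sub_dotProduct, dotProduct_sub, hsymm]
  ring

theorem quadraticFunctional_le_iff_mulVec_eq [DecidableEq n] (hQ : Q.PosDef) (φ : n → ℝ) :
    (∀ ψ, quadraticFunctional Q b φ ≤ quadraticFunctional Q b ψ) ↔ Q *ᵥ φ = b := by
  constructor
  · intro hmin
    obtain ⟨φ₀, hφ₀⟩ := mulVec_surjective_iff_isUnit.mpr hQ.isUnit b
    suffices φ = φ₀ from this ▸ hφ₀
    by_contra hne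
    have hpos : 0 < Q *ᵥ (φ - φ₀) ⬝ᵥ (φ - φ₀) := by
      simpa [dotProduct_comm] using hQ.dotProduct_mulVec_pos (sub_ne_zero.mpr hne)
    linarith [quadraticFunctional_eq_add_of_mulVec_eq hQ.isHermitian hφ₀ φ, hmin φ₀]
  · intro hφ ψ
    have hnonneg : 0 ≤ Q *ᵥ (ψ - φ) ⬝ᵥ (ψ - φ) := by
      simpa [dotProduct_comm] using hQ.posSemidef.dotProduct_mulVec_nonneg (ψ - φ)
    linarith [quadraticFunctional_eq_add_of_mulVec_eq hQ.isHermitian hφ ψ]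

theorem existsUnique_isMinimiser_quadraticFunctional [DecidableEq n] (hQ : Q.PosDef) :
    ∃! φ, ∀ ψ, quadraticFunctional Q b φ ≤ quadraticFunctional Q b ψ := by
  simp only [quadraticFunctional_le_iff_mulVec_eq hQ]
  exact (mulVec_injective_iff_isUnit.mpr hQ.isUnit).existsUnique_of_mem_range
    (mulVec_surjective_iff_isUnit.mpr hQ.isUnit b)

end QuadraticFunctional

theorem transpose_mulVec_dotProduct_self {n m : Type*} [Fintype n] [Fintype m]
    (C : Matrix n m ℝ) (φ : n → ℝ) : Cᵀ *ᵥ φ ⬝ᵥ Cᵀ *ᵥ φ = (C * Cᵀ) *ᵥ φ ⬝ᵥ φ := by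
  rw [← mulVec_mulVec, dotProduct_comm (C *ᵥ _), dotProduct_mulVec φ C, ← mulVec_transpose]

theorem exp_smul_transpose {n : Type*} [Fintype n] [DecidableEq n] (c : ℝ)
    (A : Matrix n n ℝ) : NormedSpace.exp (c • Aᵀ) = (NormedSpace.exp (c • A))ᵀ := by
  rw [← transpose_smul, exp_transpose]

section
attribute [local instance] Matrix.linftyOpNormedRing Matrix.linftyOpNormedAlgebra

theorem continuous_exp_smul {n : Type*} [Fintype n] [DecidableEq n] (A : Matrix n n ℝ) :
    Continuous fun t : ℝ => NormedSpace.exp (t • A) :=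
  NormedSpace.exp_continuous.comp (continuous_id.smul continuous_const)

end

attribute [local instance] Matrix.normedAddCommGroup Matrix.normedSpace

theorem intervalIntegral_mulVec_dotProduct {n : Type*} [Fintype n] {F : ℝ → Matrix n n ℝ}
    (hF : Continuous F) (a b : ℝ) (φ : n → ℝ) :
    (∫ t in a..b, F t) *ᵥ φ ⬝ᵥ φ = ∫ t in a..b, F t *ᵥ φ ⬝ᵥ φ :=
  (((dotProductBilin ℝ ℝ).flip φ ∘ₗ (mulVecBilin ℝ ℝ).flip φ).toContinuousLinearMap
    |>.intervalIntegral_comp_comm (hF.intervalIntegrable a b)).symm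

theorem intervalIntegral_dotProduct_self_eq_gramian {n m : Type*} [Fintype n] [DecidableEq n] [Fintype m]
    (A : Matrix n n ℝ) (B : Matrix n m ℝ) (T : ℝ) (φ : n → ℝ) :
    ∫ t in (0:ℝ)..T, Bᵀ *ᵥ NormedSpace.exp ((T - t) • Aᵀ) *ᵥ φ
        ⬝ᵥ Bᵀ *ᵥ NormedSpace.exp ((T - t) • Aᵀ) *ᵥ φ
      = (∫ t in (0:ℝ)..T,
          NormedSpace.exp ((T - t) • A) * B * Bᵀ * NormedSpace.exp ((T - t) • Aᵀ)) *ᵥ φ ⬝ᵥ φ := by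
  have hcont (A' : Matrix n n ℝ) : Continuous fun t : ℝ => NormedSpace.exp ((T - t) • A') :=
    (continuous_exp_smul A').comp (continuous_const.sub continuous_id)
  rw [intervalIntegral_mulVec_dotProduct
    ((((hcont A).matrix_mul continuous_const).matrix_mul continuous_const).matrix_mul (hcont Aᵀ))]
  congr 1 with t
  rw [exp_smul_transpose, mulVec_mulVec, ← transpose_mul, transpose_mulVec_dotProduct_self,
    transpose_mul]
  simp only [Matrix.mul_assoc]

theorem functional_J_unique_minimiser_general
    {N M : ℕ} (A : Matrix (Fin N) (Fin N) ℝ) (B : Matrix (Fin N) (Fin M) ℝ)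
    (T : ℝ)
    (Λ : Matrix (Fin N) (Fin N) ℝ)
    (hΛ : Λ = ∫ t in (0:ℝ)..T,
      NormedSpace.exp ((T - t) • A) * B * Bᵀ * NormedSpace.exp ((T - t) • Aᵀ))
    (hpos : Λ.PosDef)
    (x0 x1 : Fin N → ℝ)
    (J : (Fin N → ℝ) → ℝ)
    (hJ : ∀ φ0 : Fin N → ℝ,
      J φ0 = (1 / 2) * (∫ t in (0:ℝ)..T,
          (Bᵀ.mulVec ((NormedSpace.exp ((T - t) • Aᵀ)).mulVec φ0)) ⬝ᵥ
            (Bᵀ.mulVec ((NormedSpace.exp ((T - t) • Aᵀ)).mulVec φ0)))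
        - x1 ⬝ᵥ φ0 + x0 ⬝ᵥ ((NormedSpace.exp (T • Aᵀ)).mulVec φ0)) :
    (∀ φ0 : Fin N → ℝ,
      J φ0 = (1 / 2) * (Λ.mulVec φ0 ⬝ᵥ φ0)
        - (x1 - (NormedSpace.exp (T • A)).mulVec x0) ⬝ᵥ φ0) ∧
    (∃! φt : Fin N → ℝ, ∀ ψ : Fin N → ℝ, J φt ≤ J ψ) ∧
    (∀ φt : Fin N → ℝ, (∀ ψ : Fin N → ℝ, J φt ≤ J ψ) ↔
      Λ.mulVec φt = x1 - (NormedSpace.exp (T • A)).mulVec x0) := by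
  have hJ_eq : J = quadraticFunctional Λ (x1 - NormedSpace.exp (T • A) *ᵥ x0) := by
    funext φ
    have hx0 : x0 ⬝ᵥ NormedSpace.exp (T • Aᵀ) *ᵥ φ = NormedSpace.exp (T • A) *ᵥ x0 ⬝ᵥ φ := by
      rw [exp_smul_transpose, dotProduct_mulVec, vecMul_transpose]
    rw [hJ, intervalIntegral_dotProduct_self_eq_gramian, ← hΛ, hx0, quadraticFunctional, sub_dotProduct]
    ring
  subst hJ_eq
  exact ⟨fun _ => rfl, existsUnique_isMinimiser_quadraticFunctional hpos,
    quadraticFunctional_le_iff_mulVec_eq hpos⟩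

/-- If the Gramian `Λ` is positive definite, the quadratic functional
`J(φ⁰) = ½ ∫₀^T |Bᵀ e^{(T−t)Aᵀ} φ⁰|² dt − ⟨x¹, φ⁰⟩ + ⟨x⁰, e^{TAᵀ} φ⁰⟩` equals
`½⟨Λφ⁰, φ⁰⟩ − ⟨x¹ − e^{TA}x⁰, φ⁰⟩`, it has a unique global minimiser, and a point is a
global minimiser iff it satisfies the Euler–Lagrange equation `Λ φ̃⁰ = x¹ − e^{TA} x⁰`. -/
theorem functional_J_unique_minimiser
    {N M : ℕ} (A : Matrix (Fin N) (Fin N) ℝ) (B : Matrix (Fin N) (Fin M) ℝ)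
    (T : ℝ) (hT : 0 < T)
    (Λ : Matrix (Fin N) (Fin N) ℝ)
    (hΛ : Λ = ∫ t in (0:ℝ)..T,
      NormedSpace.exp ((T - t) • A) * B * Bᵀ * NormedSpace.exp ((T - t) • Aᵀ))
    (hpos : Λ.PosDef)
    (x0 x1 : Fin N → ℝ)
    (J : (Fin N → ℝ) → ℝ)
    (hJ : ∀ φ0 : Fin N → ℝ,
      J φ0 = (1 / 2) * (∫ t in (0:ℝ)..T,
          (Bᵀ.mulVec ((NormedSpace.exp ((T - t) • Aᵀ)).mulVec φ0)) ⬝ᵥ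
            (Bᵀ.mulVec ((NormedSpace.exp ((T - t) • Aᵀ)).mulVec φ0)))
        - x1 ⬝ᵥ φ0 + x0 ⬝ᵥ ((NormedSpace.exp (T • Aᵀ)).mulVec φ0)) :
    (∀ φ0 : Fin N → ℝ,
      J φ0 = (1 / 2) * (Λ.mulVec φ0 ⬝ᵥ φ0)
        - (x1 - (NormedSpace.exp (T • A)).mulVec x0) ⬝ᵥ φ0) ∧
    (∃! φt : Fin N → ℝ, ∀ ψ : Fin N → ℝ, J φt ≤ J ψ) ∧
    (∀ φt : Fin N → ℝ, (∀ ψ : Fin N → ℝ, J φt ≤ J ψ) ↔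
      Λ.mulVec φt = x1 - (NormedSpace.exp (T • A)).mulVec x0) :=
  functional_J_unique_minimiser_general A B T Λ hΛ hpos x0 x1 J hJ
end

section
/- Assume Λ is positive definite, let φ̃⁰ be the solution of Λ φ̃⁰ = x¹ − e^{TA} x⁰, and set û(t) = Bᵀ e^{(T−t)Aᵀ} φ̃⁰. Then among all controls u ∈ L²((0,T); ℝ^M) satisfying e^{TA} x⁰ + ∫₀^T e^{(T−t)A} B u(t) dt = x¹, the control û has minimal L² norm: ∫₀^T |u(t)|² dt ≥ ∫₀^T |û(t)|² dt, with equality if and only if u = û almost everywhere. -/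
open Matrix MeasureTheory

attribute [local instance] Matrix.normedAddCommGroup Matrix.normedSpace

open scoped ENNReal

/-! If a control `u` reaches `x¹`, then with `F t = e^{(T-t)A} B` both `∫ F u` and
`∫ F û = Λ φ̃⁰` equal `x¹ - e^{TA} x⁰`; since `û = Fᵀ φ̃⁰`, this gives
`⟨û, u⟩ = φ̃⁰ ⬝ᵥ ∫ F u = φ̃⁰ ⬝ᵥ ∫ F û = ⟨û, û⟩` in `L²(0,T)`. Hence `u - û ⊥ û`, and Pythagoras
`‖u‖² = ‖û‖² + ‖u - û‖²` gives both the inequality and the equality case. -/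

theorem Matrix.continuous_exp {n : Type*} [Fintype n] [DecidableEq n] :
    Continuous (NormedSpace.exp : Matrix n n ℝ → Matrix n n ℝ) :=
  open scoped Matrix.Norms.Operator in NormedSpace.exp_continuous

section Compact

variable {X : Type*} [TopologicalSpace X] [MeasurableSpace X] [OpensMeasurableSpace X]
  {μ : Measure X} {A K : Set X}

theorem ContinuousOn.memLp_restrict_of_subset {E : Type*} [NormedAddCommGroup E]
    [SecondCountableTopologyEither X E] [IsFiniteMeasureOnCompacts μ] {f : X → E}
    (hf : ContinuousOn f K) (hK : IsCompact K) (hA : MeasurableSet A) (hAK : A ⊆ K)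
    (p : ℝ≥0∞) : MemLp f p (μ.restrict A) := by
  have : IsFiniteMeasure (μ.restrict A) :=
    ⟨by simpa using (measure_mono hAK).trans_lt hK.measure_lt_top⟩
  obtain ⟨C, hC⟩ := hK.exists_bound_of_continuousOn hf
  exact .of_bound ((hf.mono hAK).aestronglyMeasurable hA) C
    (ae_restrict_of_forall_mem hA fun x hx => hC x (hAK hx))

theorem MeasureTheory.IntegrableOn.continuousOn_mulVec_of_subset {m n : Type*} [Fintype m]
    [Fintype n] {F : X → Matrix m n ℝ} {u : X → n → ℝ} (hF : ContinuousOn F K)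
    (hu : IntegrableOn u A μ) (hK : IsCompact K) (hA : MeasurableSet A) (hAK : A ⊆ K) :
    IntegrableOn (fun x => F x *ᵥ u x) A μ :=
  Integrable.of_eval fun i => integrable_finsetSum _ fun j _ =>
    IntegrableOn.continuousOn_mul_of_subset
      ((continuous_apply j).comp_continuousOn ((continuous_apply i).comp_continuousOn hF))
      (hu.eval j) hK hA hAK

end Compact

section Integral

variable {α ι m n : Type*} [MeasurableSpace α] {μ : Measure α} [Fintype ι] [Fintype m]
  [Fintype n]

theorem integral_const_dotProduct (c : ι → ℝ) {f : α → ι → ℝ} (hf : Integrable f μ) :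
    ∫ t, c ⬝ᵥ f t ∂μ = c ⬝ᵥ ∫ t, f t ∂μ :=
  (LinearMap.toContinuousLinearMap (dotProductBilin ℝ ℝ c)).integral_comp_comm hf

theorem integral_transpose_mulVec_dotProduct {F : α → Matrix m n ℝ} {u : α → n → ℝ}
    (hFu : Integrable (fun t => F t *ᵥ u t) μ) (φ : m → ℝ) :
    ∫ t, ((F t)ᵀ *ᵥ φ) ⬝ᵥ u t ∂μ = φ ⬝ᵥ ∫ t, F t *ᵥ u t ∂μ := by
  simp_rw [mulVec_transpose, ← dotProduct_mulVec]
  exact integral_const_dotProduct φ hFu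

theorem MeasureTheory.MemLp.integrable_dotProduct {f g : α → ι → ℝ} (hf : MemLp f 2 μ)
    (hg : MemLp g 2 μ) : Integrable (fun t => f t ⬝ᵥ g t) μ :=
  integrable_finsetSum _ fun i _ => (hf.eval i).integrable_mul (hg.eval i)

-- `Integrable G` does not elaborate for matrices under the entrywise norm (its topology is not
-- reducibly the matrix topology), so continuity is assumed instead.
theorem intervalIntegral.integral_mulVec_const {G : ℝ → Matrix m n ℝ} (hG : Continuous G)
    (a b : ℝ) (v : n → ℝ) :
    ∫ t in a..b, G t *ᵥ v = (∫ t in a..b, G t) *ᵥ v :=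
  (LinearMap.toContinuousLinearMap ((mulVecBilin ℝ ℝ).flip v : Matrix m n ℝ →ₗ[ℝ] m → ℝ)
    ).intervalIntegral_comp_comm (hG.intervalIntegrable a b)

end Integral

section Orthogonal

variable {α ι : Type*} [MeasurableSpace α] {μ : Measure α} [Fintype ι] {u v : α → ι → ℝ}

theorem integral_dotProduct_self_eq_add_of_orthogonal (hu : MemLp u 2 μ) (hv : MemLp v 2 μ)
    (horth : ∫ t, v t ⬝ᵥ u t ∂μ = ∫ t, v t ⬝ᵥ v t ∂μ) :
    ∫ t, u t ⬝ᵥ u t ∂μ = ∫ t, v t ⬝ᵥ v t ∂μ + ∫ t, (u t - v t) ⬝ᵥ (u t - v t) ∂μ := by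
  have hexpand : ∀ t, u t ⬝ᵥ u t =
      (v t ⬝ᵥ v t + (u t - v t) ⬝ᵥ (u t - v t)) + 2 * (v t ⬝ᵥ u t - v t ⬝ᵥ v t) := by
    intro t
    simp only [sub_dotProduct, dotProduct_sub, dotProduct_comm (u t) (v t)]
    ring
  have hvv := hv.integrable_dotProduct hv
  have hvu := hv.integrable_dotProduct hu
  have hdd : Integrable (fun t => (u t - v t) ⬝ᵥ (u t - v t)) μ :=
    (hu.sub hv).integrable_dotProduct (hu.sub hv)
  simp_rw [hexpand]
  rw [integral_add ?_ ?_, integral_add hvv hdd, integral_const_mul, integral_sub hvu hvv, horth,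
    sub_self, mul_zero, add_zero]
  exacts [hvv.add hdd, (hvu.sub hvv).const_mul 2]

theorem integral_dotProduct_self_le_and_eq_iff_of_orthogonal (hu : MemLp u 2 μ)
    (hv : MemLp v 2 μ) (horth : ∫ t, v t ⬝ᵥ u t ∂μ = ∫ t, v t ⬝ᵥ v t ∂μ) :
    ∫ t, v t ⬝ᵥ v t ∂μ ≤ ∫ t, u t ⬝ᵥ u t ∂μ ∧
      (∫ t, u t ⬝ᵥ u t ∂μ = ∫ t, v t ⬝ᵥ v t ∂μ ↔ u =ᵐ[μ] v) := by
  have hnonneg : 0 ≤ fun t => (u t - v t) ⬝ᵥ (u t - v t) := fun t =>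
    Fintype.sum_nonneg fun i => mul_self_nonneg _
  rw [integral_dotProduct_self_eq_add_of_orthogonal hu hv horth, add_eq_left,
    integral_eq_zero_iff_of_nonneg hnonneg ((hu.sub hv).integrable_dotProduct (hu.sub hv))]
  refine ⟨le_add_of_nonneg_right (integral_nonneg hnonneg), ?_⟩
  simp only [Filter.EventuallyEq, Pi.zero_apply, dotProduct_self_eq_zero, sub_eq_zero]

end Orthogonal

theorem minimal_norm_control_general
    {N M : ℕ} (A : Matrix (Fin N) (Fin N) ℝ) (B : Matrix (Fin N) (Fin M) ℝ)
    (T : ℝ) (hT : 0 < T)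
    (Λ : Matrix (Fin N) (Fin N) ℝ)
    (hΛ : Λ = ∫ t in (0:ℝ)..T,
      NormedSpace.exp ((T - t) • A) * B * Bᵀ * NormedSpace.exp ((T - t) • Aᵀ))
    (x0 x1 φt : Fin N → ℝ)
    (hφt : Λ.mulVec φt = x1 - (NormedSpace.exp (T • A)).mulVec x0)
    (uhat : ℝ → Fin M → ℝ)
    (huhat : ∀ t : ℝ, uhat t = Bᵀ.mulVec ((NormedSpace.exp ((T - t) • Aᵀ)).mulVec φt)) :
    ∀ u : ℝ → Fin M → ℝ,
      MemLp u 2 (volume.restrict (Set.Ioc 0 T)) →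
      x1 = (NormedSpace.exp (T • A)).mulVec x0 +
        ∫ t in (0:ℝ)..T, (NormedSpace.exp ((T - t) • A)).mulVec (B.mulVec (u t)) →
      (∫ t in (0:ℝ)..T, uhat t ⬝ᵥ uhat t) ≤ (∫ t in (0:ℝ)..T, u t ⬝ᵥ u t) ∧
      ((∫ t in (0:ℝ)..T, u t ⬝ᵥ u t) = (∫ t in (0:ℝ)..T, uhat t ⬝ᵥ uhat t) ↔
        ∀ᵐ t ∂(volume.restrict (Set.Ioc 0 T)), u t = uhat t) := by
  intro u hu hreach
  set F : ℝ → Matrix (Fin N) (Fin M) ℝ := fun t => NormedSpace.exp ((T - t) • A) * B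
  have hF : Continuous F := (continuous_exp.comp (by fun_prop)).matrix_mul continuous_const
  have huhatF : uhat = fun t => (F t)ᵀ *ᵥ φt := by
    ext1 t
    rw [huhat, transpose_mul, ← mulVec_mulVec, ← exp_transpose, transpose_smul]
  have hΛF : Λ = ∫ t in (0:ℝ)..T, F t * (F t)ᵀ := by
    simp only [hΛ, F, transpose_mul, ← exp_transpose, transpose_smul, Matrix.mul_assoc]
  subst huhatF
  have hFv {v : ℝ → Fin M → ℝ} (hv : MemLp v 2 (volume.restrict (Set.Ioc 0 T))) :
      IntegrableOn (fun t => F t *ᵥ v t) (Set.Ioc 0 T) :=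
    IntegrableOn.continuousOn_mulVec_of_subset hF.continuousOn (hv.integrable one_le_two)
      isCompact_Icc measurableSet_Ioc Set.Ioc_subset_Icc_self
  have huhat_memLp : MemLp (fun t => (F t)ᵀ *ᵥ φt) 2 (volume.restrict (Set.Ioc 0 T)) :=
    (hF.matrix_transpose.matrix_mulVec continuous_const).continuousOn.memLp_restrict_of_subset
      isCompact_Icc measurableSet_Ioc Set.Ioc_subset_Icc_self 2
  have hgram : ∫ t in Set.Ioc 0 T, F t *ᵥ ((F t)ᵀ *ᵥ φt) = Λ *ᵥ φt := by
    rw [hΛF, ← intervalIntegral.integral_mulVec_const (hF.matrix_mul hF.matrix_transpose),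
      intervalIntegral.integral_of_le hT.le]
    simp only [mulVec_mulVec]
  have hsteer : ∫ t in Set.Ioc 0 T, F t *ᵥ u t = Λ *ᵥ φt := by
    rw [hφt, hreach, add_sub_cancel_left, intervalIntegral.integral_of_le hT.le]
    simp only [F, mulVec_mulVec]
  have horth : ∫ t in Set.Ioc 0 T, ((F t)ᵀ *ᵥ φt) ⬝ᵥ u t =
      ∫ t in Set.Ioc 0 T, ((F t)ᵀ *ᵥ φt) ⬝ᵥ ((F t)ᵀ *ᵥ φt) := by
    rw [integral_transpose_mulVec_dotProduct (hFv hu), hsteer,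
      integral_transpose_mulVec_dotProduct (hFv huhat_memLp), hgram]
  simp only [intervalIntegral.integral_of_le hT.le]
  exact integral_dotProduct_self_le_and_eq_iff_of_orthogonal hu huhat_memLp horth

/-- If `Λ` is positive definite, `φ̃⁰` solves `Λ φ̃⁰ = x¹ − e^{TA} x⁰` and
`û(t) = Bᵀ e^{(T−t)Aᵀ} φ̃⁰`, then among all `L²` controls steering `x⁰` to `x¹` in time `T`,
the control `û` has minimal `L²` norm, with equality only for controls agreeing with `û`
almost everywhere on `(0,T)`. -/
theorem minimal_norm_control
    {N M : ℕ} (A : Matrix (Fin N) (Fin N) ℝ) (B : Matrix (Fin N) (Fin M) ℝ)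
    (T : ℝ) (hT : 0 < T)
    (Λ : Matrix (Fin N) (Fin N) ℝ)
    (hΛ : Λ = ∫ t in (0:ℝ)..T,
      NormedSpace.exp ((T - t) • A) * B * Bᵀ * NormedSpace.exp ((T - t) • Aᵀ))
    (hpos : Λ.PosDef)
    (x0 x1 φt : Fin N → ℝ)
    (hφt : Λ.mulVec φt = x1 - (NormedSpace.exp (T • A)).mulVec x0)
    (uhat : ℝ → Fin M → ℝ)
    (huhat : ∀ t : ℝ, uhat t = Bᵀ.mulVec ((NormedSpace.exp ((T - t) • Aᵀ)).mulVec φt)) :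
    ∀ u : ℝ → Fin M → ℝ,
      MemLp u 2 (volume.restrict (Set.Ioc 0 T)) →
      x1 = (NormedSpace.exp (T • A)).mulVec x0 +
        ∫ t in (0:ℝ)..T, (NormedSpace.exp ((T - t) • A)).mulVec (B.mulVec (u t)) →
      (∫ t in (0:ℝ)..T, uhat t ⬝ᵥ uhat t) ≤ (∫ t in (0:ℝ)..T, u t ⬝ᵥ u t) ∧
      ((∫ t in (0:ℝ)..T, u t ⬝ᵥ u t) = (∫ t in (0:ℝ)..T, uhat t ⬝ᵥ uhat t) ↔
        ∀ᵐ t ∂(volume.restrict (Set.Ioc 0 T)), u t = uhat t) :=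
  minimal_norm_control_general A B T hT Λ hΛ x0 x1 φt hφt uhat huhat
end

section
/- (First greedy snapshot is weak-greedy optimal.) Suppose max_{ν̃ ∈ 𝒩̃} |b_ν̃| ≥ ε/2, and let ν₁ ∈ 𝒩̃ attain this maximum, i.e. |b_{ν₁}| ≥ |b_ν̃| for all ν̃ ∈ 𝒩̃. Then |φ⁰_{ν₁}| ≥ γ · sup_{ν ∈ 𝒩} |φ⁰_ν|, where γ = Λ₋ / (2 Λ₊). -/
/-!
Coercivity gives `Λ₋ ‖φ⁰_μ‖ ≤ ‖b_μ‖` for every `μ`, while symmetry and the upper bound make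
`Λ₊` an operator-norm bound, so `‖b_{ν₁}‖ ≤ Λ₊ ‖φ⁰_{ν₁}‖`. For `ν ∈ 𝒩` pick a net point `μ`
within `δ`; the Lipschitz bound and the choice of `δ` give
`Λ₋ ‖φ⁰_ν‖ ≤ ‖b_μ‖ + ε/2 ≤ 2 ‖b_{ν₁}‖ ≤ 2 Λ₊ ‖φ⁰_{ν₁}‖`.
-/

section InnerProductSpace

variable {E : Type*} [NormedAddCommGroup E] [InnerProductSpace ℝ E]

lemma mul_norm_le_norm_of_mul_norm_sq_le_inner {c : ℝ} {x y : E} (h : c * ‖x‖ ^ 2 ≤ inner ℝ y x) :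
    c * ‖x‖ ≤ ‖y‖ := by
  rcases (norm_nonneg x).eq_or_lt with hx | hx
  · simp [← hx]
  have : c * ‖x‖ * ‖x‖ ≤ ‖y‖ * ‖x‖ := by
    nlinarith [real_inner_le_norm y x]
  exact le_of_mul_le_mul_right this hx

lemma ContinuousLinearMap.opNorm_le_of_abs_inner_le {T : E →L[ℝ] E}
    (hT : (T : E →ₗ[ℝ] E).IsSymmetric) {C : ℝ} (hC : 0 ≤ C)
    (h : ∀ x, |inner ℝ (T x) x| ≤ C * ‖x‖ ^ 2) : ‖T‖ ≤ C := by
  rw [T.norm_eq_iSup_rayleighQuotient hT]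
  refine ciSup_le fun x => ?_
  rcases eq_or_ne x 0 with rfl | hx
  · simpa using hC
  have hx2 : 0 < ‖x‖ ^ 2 := by positivity
  rw [rayleighQuotient, reApplyInnerSelf_apply, RCLike.re_to_real, abs_div, abs_of_pos hx2,
    div_le_iff₀ hx2]
  exact h x

end InnerProductSpace

lemma Matrix.norm_toEuclideanLin_apply_le {n : Type*} [Fintype n] [DecidableEq n]
    {A : Matrix n n ℝ} (hA : A.IsSymm) {C : ℝ} (hC : 0 ≤ C)
    (hpos : ∀ x, 0 ≤ inner ℝ (A.toEuclideanLin x) x)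
    (hle : ∀ x, inner ℝ (A.toEuclideanLin x) x ≤ C * ‖x‖ ^ 2) (x : EuclideanSpace ℝ n) :
    ‖A.toEuclideanLin x‖ ≤ C * ‖x‖ := by
  have hsymm : (toEuclideanCLM (𝕜 := ℝ) A : EuclideanSpace ℝ n →ₗ[ℝ] _).IsSymmetric := by
    rw [coe_toEuclideanCLM_eq_toEuclideanLin, isSymmetric_toEuclideanLin_iff,
      isHermitian_iff_isSymm]
    exact hA
  have hnorm : ‖toEuclideanCLM (𝕜 := ℝ) A‖ ≤ C :=
    ContinuousLinearMap.opNorm_le_of_abs_inner_le hsymm hC fun x =>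
      (abs_of_nonneg (hpos x)).trans_le (hle x)
  exact ((toEuclideanCLM (𝕜 := ℝ) A).le_opNorm x).trans (by gcongr)

theorem greedy_first_snapshot_general
    {d N : ℕ}
    (𝒩 : Set (EuclideanSpace ℝ (Fin d)))
    (Λm Λp : ℝ) (hΛm : 0 < Λm) (hmp : Λm ≤ Λp)
    (Λ : EuclideanSpace ℝ (Fin d) → Matrix (Fin N) (Fin N) ℝ)
    (hsym : ∀ ν ∈ 𝒩, (Λ ν).IsSymm)
    (hlow : ∀ ν ∈ 𝒩, ∀ ψ : EuclideanSpace ℝ (Fin N),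
      Λm * ‖ψ‖ ^ 2 ≤ (inner ℝ (Matrix.toEuclideanLin (Λ ν) ψ) ψ : ℝ))
    (hupp : ∀ ν ∈ 𝒩, ∀ ψ : EuclideanSpace ℝ (Fin N),
      (inner ℝ (Matrix.toEuclideanLin (Λ ν) ψ) ψ : ℝ) ≤ Λp * ‖ψ‖ ^ 2)
    (b φ : EuclideanSpace ℝ (Fin d) → EuclideanSpace ℝ (Fin N))
    (hφ : ∀ ν ∈ 𝒩, Matrix.toEuclideanLin (Λ ν) (φ ν) = b ν)
    (Cφ : ℝ) (hCφ : 0 < Cφ)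
    (hLip : ∀ ν ∈ 𝒩, ∀ μ ∈ 𝒩, ‖φ ν - φ μ‖ ≤ Cφ * ‖ν - μ‖)
    (ε δ : ℝ) (hδ : δ ≤ ε / (2 * Cφ * Λm))
    (Nnet : Finset (EuclideanSpace ℝ (Fin d))) (hNnet : ↑Nnet ⊆ 𝒩)
    (hnet : ∀ ν ∈ 𝒩, ∃ μ ∈ Nnet, ‖ν - μ‖ < δ)
    (ν₁ : EuclideanSpace ℝ (Fin d)) (hν₁ : ν₁ ∈ Nnet)
    (hmax : ∀ μ ∈ Nnet, ‖b μ‖ ≤ ‖b ν₁‖)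
    (hbig : ε / 2 ≤ ‖b ν₁‖) :
    (Λm / (2 * Λp)) * (⨆ ν : 𝒩, ‖φ (ν : EuclideanSpace ℝ (Fin d))‖) ≤ ‖φ ν₁‖ := by
  have hΛp : 0 < Λp := hΛm.trans_le hmp
  have hν₁𝒩 : ν₁ ∈ 𝒩 := hNnet hν₁
  have hcoercive : ∀ μ ∈ 𝒩, Λm * ‖φ μ‖ ≤ ‖b μ‖ := fun μ hμ =>
    hφ μ hμ ▸ mul_norm_le_norm_of_mul_norm_sq_le_inner (hlow μ hμ (φ μ))
  have hbounded : ‖b ν₁‖ ≤ Λp * ‖φ ν₁‖ :=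
    hφ ν₁ hν₁𝒩 ▸ Matrix.norm_toEuclideanLin_apply_le (hsym ν₁ hν₁𝒩) hΛp.le
      (fun ψ => (by positivity : 0 ≤ Λm * ‖ψ‖ ^ 2).trans (hlow ν₁ hν₁𝒩 ψ)) (hupp ν₁ hν₁𝒩) _
  have hδ' : Cφ * Λm * δ ≤ ε / 2 := by
    rw [le_div_iff₀ (by positivity)] at hδ
    linarith
  have hpointwise (ν : 𝒩) : Λm * ‖φ ν‖ ≤ 2 * ‖b ν₁‖ := by
    obtain ⟨μ, hμ, hνμ⟩ := hnet ν ν.2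
    have hLipνμ := mul_le_mul_of_nonneg_left (hLip ν ν.2 μ (hNnet hμ)) hΛm.le
    have hdist : Cφ * Λm * ‖(ν : EuclideanSpace ℝ (Fin d)) - μ‖ ≤ Cφ * Λm * δ := by gcongr
    calc Λm * ‖φ ν‖ ≤ Λm * ‖φ μ‖ + Λm * ‖φ ν - φ μ‖ := by
          rw [← mul_add]; gcongr; exact norm_le_insert' _ _
      _ ≤ ‖b μ‖ + ε / 2 := by linarith [hcoercive μ (hNnet hμ)]
      _ ≤ 2 * ‖b ν₁‖ := by linarith [hmax μ hμ]
  have hsup : (⨆ ν : 𝒩, ‖φ (ν : EuclideanSpace ℝ (Fin d))‖) ≤ 2 * Λp * ‖φ ν₁‖ / Λm :=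
    Real.iSup_le (fun ν => by rw [le_div_iff₀ hΛm]; linarith [hpointwise ν]) (by positivity)
  calc (Λm / (2 * Λp)) * (⨆ ν : 𝒩, ‖φ (ν : EuclideanSpace ℝ (Fin d))‖)
      ≤ (Λm / (2 * Λp)) * (2 * Λp * ‖φ ν₁‖ / Λm) := by gcongr
    _ = ‖φ ν₁‖ := by field_simp

/-- **First greedy snapshot is weak-greedy optimal.** If `ν₁ ∈ 𝒩̃` maximises `|b_μ|` over
the `δ`-net `𝒩̃` and this maximum is at least `ε/2`, then
`|φ⁰_{ν₁}| ≥ γ · sup_{ν ∈ 𝒩} |φ⁰_ν|` with `γ = Λ₋/(2Λ₊)`. -/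
theorem greedy_first_snapshot
    {d N : ℕ}
    (𝒩 : Set (EuclideanSpace ℝ (Fin d))) (h𝒩 : IsCompact 𝒩)
    (Λm Λp : ℝ) (hΛm : 0 < Λm) (hmp : Λm ≤ Λp)
    (Λ : EuclideanSpace ℝ (Fin d) → Matrix (Fin N) (Fin N) ℝ)
    (hsym : ∀ ν ∈ 𝒩, (Λ ν).IsSymm)
    (hlow : ∀ ν ∈ 𝒩, ∀ ψ : EuclideanSpace ℝ (Fin N),
      Λm * ‖ψ‖ ^ 2 ≤ (inner ℝ (Matrix.toEuclideanLin (Λ ν) ψ) ψ : ℝ))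
    (hupp : ∀ ν ∈ 𝒩, ∀ ψ : EuclideanSpace ℝ (Fin N),
      (inner ℝ (Matrix.toEuclideanLin (Λ ν) ψ) ψ : ℝ) ≤ Λp * ‖ψ‖ ^ 2)
    (b φ : EuclideanSpace ℝ (Fin d) → EuclideanSpace ℝ (Fin N))
    (hφ : ∀ ν ∈ 𝒩, Matrix.toEuclideanLin (Λ ν) (φ ν) = b ν)
    (Cφ : ℝ) (hCφ : 0 < Cφ)
    (hLip : ∀ ν ∈ 𝒩, ∀ μ ∈ 𝒩, ‖φ ν - φ μ‖ ≤ Cφ * ‖ν - μ‖)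
    (ε δ : ℝ) (hε : 0 < ε) (hδ0 : 0 < δ) (hδ : δ ≤ ε / (2 * Cφ * Λm))
    (Nnet : Finset (EuclideanSpace ℝ (Fin d))) (hNnet : ↑Nnet ⊆ 𝒩)
    (hnet : ∀ ν ∈ 𝒩, ∃ μ ∈ Nnet, ‖ν - μ‖ < δ)
    (ν₁ : EuclideanSpace ℝ (Fin d)) (hν₁ : ν₁ ∈ Nnet)
    (hmax : ∀ μ ∈ Nnet, ‖b μ‖ ≤ ‖b ν₁‖)
    (hbig : ε / 2 ≤ ‖b ν₁‖) :
    (Λm / (2 * Λp)) * (⨆ ν : 𝒩, ‖φ (ν : EuclideanSpace ℝ (Fin d))‖) ≤ ‖φ ν₁‖ :=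
  greedy_first_snapshot_general 𝒩 Λm Λp hΛm hmp Λ hsym hlow hupp b φ hφ Cφ hCφ hLip ε δ hδ Nnet
    hNnet hnet ν₁ hν₁ hmax hbig
end

section
/- (Stopping criterion guarantees the approximation error.) Let Φ ⊂ ℝ^N be a linear subspace such that the stopping criterion max_{ν̃ ∈ 𝒩̃} dist(b_ν̃, Λ_ν̃ Φ) < ε/2 holds. Then the whole family of minimizers is approximated: sup_{ν ∈ 𝒩} dist(φ⁰_ν, Φ) < ε / Λ₋. -/
open Metric

/-!
On a net point `μ`, coercivity of `Λ_μ` gives `Λ₋ ‖x‖ ≤ ‖Λ_μ x‖`, so distances to `Φ` are at most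
`1/Λ₋` times distances of the images to `Λ_μ Φ`; the stopping criterion thus puts every `φ⁰_μ`
strictly within `ε/(2Λ₋)` of `Φ`, uniformly since the net is finite. An arbitrary `ν` lies within
`δ` of a net point, and the Lipschitz bound adds at most `C_φ δ ≤ ε/(2Λ₋)`.
-/

theorem mul_norm_le_norm_of_coercive {E : Type*} [NormedAddCommGroup E] [InnerProductSpace ℝ E]
    {T : E → E} {m : ℝ} (hT : ∀ x, m * ‖x‖ ^ 2 ≤ inner ℝ (T x) x) (x : E) :
    m * ‖x‖ ≤ ‖T x‖ := by
  rcases eq_or_ne x 0 with rfl | hx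
  · simp
  · have h : (m * ‖x‖) * ‖x‖ ≤ ‖T x‖ * ‖x‖ := by
      rw [mul_assoc, ← sq]
      exact (hT x).trans (real_inner_le_norm _ _)
    exact le_of_mul_le_mul_right h (norm_pos_iff.mpr hx)

theorem mul_infDist_le_infDist_image {E F 𝓕 : Type*} [SeminormedAddCommGroup E]
    [SeminormedAddCommGroup F] [FunLike 𝓕 E F] [AddMonoidHomClass 𝓕 E F] (T : 𝓕) {m : ℝ}
    (hm : 0 ≤ m) (hT : ∀ x, m * ‖x‖ ≤ ‖T x‖) {s : Set E} (hs : s.Nonempty) (x : E) :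
    m * infDist x s ≤ infDist (T x) (T '' s) := by
  rw [le_infDist (hs.image T)]
  rintro _ ⟨y, hy, rfl⟩
  calc m * infDist x s ≤ m * dist x y := mul_le_mul_of_nonneg_left (infDist_le_dist_of_mem hy) hm
    _ ≤ dist (T x) (T y) := by simpa only [dist_eq_norm, map_sub] using hT (x - y)

theorem mul_infDist_le_infDist_map_of_coercive {E : Type*} [NormedAddCommGroup E]
    [InnerProductSpace ℝ E] (T : E →ₗ[ℝ] E) {m : ℝ} (hm : 0 ≤ m)
    (hT : ∀ x, m * ‖x‖ ^ 2 ≤ inner ℝ (T x) x) (Φ : Submodule ℝ E) (x : E) :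
    m * infDist x Φ ≤ infDist (T x) (Φ.map T) := by
  rw [Submodule.map_coe]
  exact mul_infDist_le_infDist_image T hm (mul_norm_le_norm_of_coercive hT) ⟨0, Φ.zero_mem⟩ x

theorem Real.iSup_lt_add_of_finite_net {ι : Type*} {S : Set ι} (s : Finset ι) {f : ι → ℝ}
    {a r : ℝ} (ha : 0 < a) (hr : 0 ≤ r) (hs : ∀ i ∈ s, f i < a)
    (hS : ∀ x ∈ S, ∃ i ∈ s, f x ≤ f i + r) :
    ⨆ x : S, f x < a + r := by
  obtain ⟨c, hc, hca⟩ := Finset.exists_between' (insert 0 (s.image f)) {a}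
    (by simpa using ⟨ha, hs⟩)
  simp only [Finset.mem_insert, Finset.mem_image, forall_eq_or_imp, forall_exists_index, and_imp,
    forall_apply_eq_imp_iff₂, Finset.mem_singleton, forall_eq] at hc hca
  have hbound : ∀ x : S, f x ≤ c + r := fun ⟨x, hx⟩ ↦
    let ⟨i, hi, hxi⟩ := hS x hx
    hxi.trans (by linarith [hc.2 i hi])
  calc ⨆ x : S, f x ≤ c + r := Real.iSup_le hbound (by linarith [hc.1])
    _ < a + r := by linarith

theorem greedy_stopping_criterion_general
    {d N : ℕ}
    (𝒩 : Set (EuclideanSpace ℝ (Fin d)))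
    (Λm : ℝ) (hΛm : 0 < Λm)
    (Λ : EuclideanSpace ℝ (Fin d) → Matrix (Fin N) (Fin N) ℝ)
    (hlow : ∀ ν ∈ 𝒩, ∀ ψ : EuclideanSpace ℝ (Fin N),
      Λm * ‖ψ‖ ^ 2 ≤ (inner ℝ (Matrix.toEuclideanLin (Λ ν) ψ) ψ : ℝ))
    (b φ : EuclideanSpace ℝ (Fin d) → EuclideanSpace ℝ (Fin N))
    (hφ : ∀ ν ∈ 𝒩, Matrix.toEuclideanLin (Λ ν) (φ ν) = b ν)
    (Cφ : ℝ) (hCφ : 0 < Cφ)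
    (hLip : ∀ ν ∈ 𝒩, ∀ μ ∈ 𝒩, ‖φ ν - φ μ‖ ≤ Cφ * ‖ν - μ‖)
    (ε δ : ℝ) (hε : 0 < ε) (hδ0 : 0 < δ) (hδ : δ ≤ ε / (2 * Cφ * Λm))
    (Nnet : Finset (EuclideanSpace ℝ (Fin d))) (hNnet : ↑Nnet ⊆ 𝒩)
    (hnet : ∀ ν ∈ 𝒩, ∃ μ ∈ Nnet, ‖ν - μ‖ < δ)
    (Φ : Submodule ℝ (EuclideanSpace ℝ (Fin N)))
    (hstop : ∀ μ ∈ Nnet,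
      infDist (b μ) (Φ.map (Matrix.toEuclideanLin (Λ μ)) : Set (EuclideanSpace ℝ (Fin N))) <
        ε / 2) :
    (⨆ ν : 𝒩, infDist (φ (ν : EuclideanSpace ℝ (Fin d)))
        (Φ : Set (EuclideanSpace ℝ (Fin N)))) < ε / Λm := by
  have hnet_dist : ∀ μ ∈ Nnet, infDist (φ μ) Φ < ε / (2 * Λm) := by
    intro μ hμ
    have h := mul_infDist_le_infDist_map_of_coercive _ hΛm.le (hlow μ (hNnet hμ)) Φ (φ μ)
    rw [hφ μ (hNnet hμ)] at h
    rw [lt_div_iff₀ (by positivity)]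
    linarith [hstop μ hμ]
  have hclose : ∀ ν ∈ 𝒩, ∃ μ ∈ Nnet, infDist (φ ν) Φ ≤ infDist (φ μ) Φ + Cφ * δ := by
    intro ν hν
    obtain ⟨μ, hμ, hνμ⟩ := hnet ν hν
    refine ⟨μ, hμ, infDist_le_infDist_add_dist.trans (add_le_add_right ?_ _)⟩
    calc dist (φ ν) (φ μ) = ‖φ ν - φ μ‖ := dist_eq_norm _ _
      _ ≤ Cφ * δ := (hLip ν hν μ (hNnet hμ)).trans (mul_le_mul_of_nonneg_left hνμ.le hCφ.le)
  have hCδ : Cφ * δ ≤ ε / (2 * Λm) := by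
    rw [le_div_iff₀ (by positivity)] at hδ ⊢
    linarith
  calc _ < ε / (2 * Λm) + Cφ * δ :=
        Real.iSup_lt_add_of_finite_net Nnet (by positivity) (by positivity) hnet_dist hclose
    _ ≤ ε / (2 * Λm) + ε / (2 * Λm) := by gcongr
    _ = ε / Λm := by rw [← add_halves (ε / Λm), div_div, mul_comm Λm]

/-- **Stopping criterion guarantees the approximation error.** If the surrogate distances
satisfy `dist(b_ν̃, Λ_ν̃ Φ) < ε/2` for every `ν̃` in the `δ`-net `𝒩̃`, then the whole family
of minimisers is approximated: `sup_{ν ∈ 𝒩} dist(φ⁰_ν, Φ) < ε/Λ₋`. -/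
theorem greedy_stopping_criterion
    {d N : ℕ}
    (𝒩 : Set (EuclideanSpace ℝ (Fin d))) (h𝒩 : IsCompact 𝒩)
    (Λm Λp : ℝ) (hΛm : 0 < Λm) (hmp : Λm ≤ Λp)
    (Λ : EuclideanSpace ℝ (Fin d) → Matrix (Fin N) (Fin N) ℝ)
    (hsym : ∀ ν ∈ 𝒩, (Λ ν).IsSymm)
    (hlow : ∀ ν ∈ 𝒩, ∀ ψ : EuclideanSpace ℝ (Fin N),
      Λm * ‖ψ‖ ^ 2 ≤ (inner ℝ (Matrix.toEuclideanLin (Λ ν) ψ) ψ : ℝ))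
    (hupp : ∀ ν ∈ 𝒩, ∀ ψ : EuclideanSpace ℝ (Fin N),
      (inner ℝ (Matrix.toEuclideanLin (Λ ν) ψ) ψ : ℝ) ≤ Λp * ‖ψ‖ ^ 2)
    (b φ : EuclideanSpace ℝ (Fin d) → EuclideanSpace ℝ (Fin N))
    (hφ : ∀ ν ∈ 𝒩, Matrix.toEuclideanLin (Λ ν) (φ ν) = b ν)
    (Cφ : ℝ) (hCφ : 0 < Cφ)
    (hLip : ∀ ν ∈ 𝒩, ∀ μ ∈ 𝒩, ‖φ ν - φ μ‖ ≤ Cφ * ‖ν - μ‖)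
    (ε δ : ℝ) (hε : 0 < ε) (hδ0 : 0 < δ) (hδ : δ ≤ ε / (2 * Cφ * Λm))
    (Nnet : Finset (EuclideanSpace ℝ (Fin d))) (hNnet : ↑Nnet ⊆ 𝒩)
    (hnet : ∀ ν ∈ 𝒩, ∃ μ ∈ Nnet, ‖ν - μ‖ < δ)
    (Φ : Submodule ℝ (EuclideanSpace ℝ (Fin N)))
    (hstop : ∀ μ ∈ Nnet,
      infDist (b μ) (Φ.map (Matrix.toEuclideanLin (Λ μ)) : Set (EuclideanSpace ℝ (Fin N))) <
        ε / 2) :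
    (⨆ ν : 𝒩, infDist (φ (ν : EuclideanSpace ℝ (Fin d)))
        (Φ : Set (EuclideanSpace ℝ (Fin N)))) < ε / Λm :=
  greedy_stopping_criterion_general 𝒩 Λm hΛm Λ hlow b φ hφ Cφ hCφ hLip ε δ hε hδ0 hδ Nnet hNnet hnet
    Φ hstop
end

section
/- (Performance estimate for the online approximate control.) Let Λ and Λ̃ be symmetric positive-definite N×N real matrices, b, b̃ ∈ ℝ^N, φ⁰ = Λ⁻¹ b, φ̃⁰ = Λ̃⁻¹ b̃, let Φ ⊂ ℝ^N be a linear subspace, and let φ* ∈ Φ be such that Λ φ* is the orthogonal projection of b onto the subspace Λ Φ. Then for every ψ ∈ Φ one has |b − Λ φ*| ≤ |b − b̃| + |Λ̃ (φ̃⁰ − ψ)| + ‖Λ̃ − Λ‖ · |ψ|. In particular, if |b − b̃| ≤ C_L δ, ‖Λ − Λ̃‖ ≤ C_Λ δ, and there exists ψ ∈ Φ with |Λ̃(φ̃⁰ − ψ)| ≤ ε/2 and |ψ| ≤ M, then |b − Λ φ*| ≤ ε/2 + (C_L + M C_Λ) δ. -/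
namespace ContinuousLinearMap

variable {𝕜 E F : Type*} [NontriviallyNormedField 𝕜]
  [SeminormedAddCommGroup E] [NormedSpace 𝕜 E] [SeminormedAddCommGroup F] [NormedSpace 𝕜 F]

theorem norm_sub_apply_le_of_perturbation (T T' : E →L[𝕜] F) (b b' : F) (ψ : E) :
    ‖b - T ψ‖ ≤ ‖b - b'‖ + ‖b' - T' ψ‖ + ‖T' - T‖ * ‖ψ‖ := by
  have hdecomp : b - T ψ = (b - b') + (b' - T' ψ) + (T' - T) ψ := by
    rw [sub_apply]; abel
  calc ‖b - T ψ‖ = ‖(b - b') + (b' - T' ψ) + (T' - T) ψ‖ := by rw [hdecomp]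
    _ ≤ ‖b - b'‖ + ‖b' - T' ψ‖ + ‖(T' - T) ψ‖ := norm_add₃_le
    _ ≤ ‖b - b'‖ + ‖b' - T' ψ‖ + ‖T' - T‖ * ‖ψ‖ := by gcongr; exact le_opNorm _ ψ

end ContinuousLinearMap

theorem online_control_performance_general
    {N : ℕ}
    (Λ Λt : Matrix (Fin N) (Fin N) ℝ)
    (b bt φt0 : EuclideanSpace ℝ (Fin N))
    (hφt0 : Matrix.toEuclideanCLM (𝕜 := ℝ) Λt φt0 = bt)
    (Φ : Submodule ℝ (EuclideanSpace ℝ (Fin N)))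
    (φs : EuclideanSpace ℝ (Fin N))
    (hproj : ∀ ψ ∈ Φ, ‖b - Matrix.toEuclideanCLM (𝕜 := ℝ) Λ φs‖ ≤
      ‖b - Matrix.toEuclideanCLM (𝕜 := ℝ) Λ ψ‖) :
    (∀ ψ ∈ Φ, ‖b - Matrix.toEuclideanCLM (𝕜 := ℝ) Λ φs‖ ≤
      ‖b - bt‖ + ‖Matrix.toEuclideanCLM (𝕜 := ℝ) Λt (φt0 - ψ)‖ +
        ‖(Matrix.toEuclideanCLM (𝕜 := ℝ) Λt : EuclideanSpace ℝ (Fin N) →L[ℝ]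
            EuclideanSpace ℝ (Fin N)) -
          (Matrix.toEuclideanCLM (𝕜 := ℝ) Λ)‖ * ‖ψ‖) ∧
    (∀ δ CL CΛ Mb ε : ℝ,
      ‖b - bt‖ ≤ CL * δ →
      ‖(Matrix.toEuclideanCLM (𝕜 := ℝ) Λ : EuclideanSpace ℝ (Fin N) →L[ℝ]
          EuclideanSpace ℝ (Fin N)) - (Matrix.toEuclideanCLM (𝕜 := ℝ) Λt)‖ ≤ CΛ * δ →
      (∃ ψ ∈ Φ, ‖Matrix.toEuclideanCLM (𝕜 := ℝ) Λt (φt0 - ψ)‖ ≤ ε / 2 ∧ ‖ψ‖ ≤ Mb) →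
      ‖b - Matrix.toEuclideanCLM (𝕜 := ℝ) Λ φs‖ ≤ ε / 2 + (CL + Mb * CΛ) * δ) := by
  set T : EuclideanSpace ℝ (Fin N) →L[ℝ] EuclideanSpace ℝ (Fin N) :=
    Matrix.toEuclideanCLM (𝕜 := ℝ) Λ
  set T' : EuclideanSpace ℝ (Fin N) →L[ℝ] EuclideanSpace ℝ (Fin N) :=
    Matrix.toEuclideanCLM (𝕜 := ℝ) Λt
  have estimate : ∀ ψ ∈ Φ, ‖b - T φs‖ ≤ ‖b - bt‖ + ‖T' (φt0 - ψ)‖ + ‖T' - T‖ * ‖ψ‖ := by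
    intro ψ hψ
    rw [map_sub, hφt0]
    exact (hproj ψ hψ).trans (T.norm_sub_apply_le_of_perturbation T' b bt ψ)
  refine ⟨estimate, fun δ CL CΛ Mb ε hb hT ⟨ψ, hψ, hres, hψMb⟩ => ?_⟩
  have hCΛδ : 0 ≤ CΛ * δ := (norm_nonneg _).trans hT
  calc ‖b - T φs‖ ≤ ‖b - bt‖ + ‖T' (φt0 - ψ)‖ + ‖T - T'‖ * ‖ψ‖ := by
        rw [norm_sub_rev T]; exact estimate ψ hψ
    _ ≤ CL * δ + ε / 2 + CΛ * δ * Mb := by gcongr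
    _ = ε / 2 + (CL + Mb * CΛ) * δ := by ring

/-- **Performance estimate for the online approximate control.** If `Λφ*` is the orthogonal
projection (nearest point) of `b` onto `ΛΦ`, `Λφ⁰ = b` and `Λ̃φ̃⁰ = b̃`, then for every
`ψ ∈ Φ`: `|b − Λφ*| ≤ |b − b̃| + |Λ̃(φ̃⁰ − ψ)| + ‖Λ̃ − Λ‖·|ψ|`; in particular, if
`|b − b̃| ≤ C_L δ`, `‖Λ − Λ̃‖ ≤ C_Λ δ` and some `ψ ∈ Φ` satisfies `|Λ̃(φ̃⁰ − ψ)| ≤ ε/2`,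
`|ψ| ≤ M`, then `|b − Λφ*| ≤ ε/2 + (C_L + M C_Λ) δ`. -/
theorem online_control_performance
    {N : ℕ}
    (Λ Λt : Matrix (Fin N) (Fin N) ℝ) (hΛ : Λ.PosDef) (hΛt : Λt.PosDef)
    (b bt φ0 φt0 : EuclideanSpace ℝ (Fin N))
    (hφ0 : Matrix.toEuclideanCLM (𝕜 := ℝ) Λ φ0 = b)
    (hφt0 : Matrix.toEuclideanCLM (𝕜 := ℝ) Λt φt0 = bt)
    (Φ : Submodule ℝ (EuclideanSpace ℝ (Fin N)))
    (φs : EuclideanSpace ℝ (Fin N)) (hφsΦ : φs ∈ Φ)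
    (hproj : ∀ ψ ∈ Φ, ‖b - Matrix.toEuclideanCLM (𝕜 := ℝ) Λ φs‖ ≤
      ‖b - Matrix.toEuclideanCLM (𝕜 := ℝ) Λ ψ‖) :
    (∀ ψ ∈ Φ, ‖b - Matrix.toEuclideanCLM (𝕜 := ℝ) Λ φs‖ ≤
      ‖b - bt‖ + ‖Matrix.toEuclideanCLM (𝕜 := ℝ) Λt (φt0 - ψ)‖ +
        ‖(Matrix.toEuclideanCLM (𝕜 := ℝ) Λt : EuclideanSpace ℝ (Fin N) →L[ℝ]
            EuclideanSpace ℝ (Fin N)) -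
          (Matrix.toEuclideanCLM (𝕜 := ℝ) Λ)‖ * ‖ψ‖) ∧
    (∀ δ CL CΛ Mb ε : ℝ,
      ‖b - bt‖ ≤ CL * δ →
      ‖(Matrix.toEuclideanCLM (𝕜 := ℝ) Λ : EuclideanSpace ℝ (Fin N) →L[ℝ]
          EuclideanSpace ℝ (Fin N)) - (Matrix.toEuclideanCLM (𝕜 := ℝ) Λt)‖ ≤ CΛ * δ →
      (∃ ψ ∈ Φ, ‖Matrix.toEuclideanCLM (𝕜 := ℝ) Λt (φt0 - ψ)‖ ≤ ε / 2 ∧ ‖ψ‖ ≤ Mb) →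
      ‖b - Matrix.toEuclideanCLM (𝕜 := ℝ) Λ φs‖ ≤ ε / 2 + (CL + Mb * CΛ) * δ) :=
  online_control_performance_general Λ Λt b bt φt0 hφt0 Φ φs hproj
end
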